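/- (Invariance of the light ray transform under the space-like projection) For f ∈ L²(ℝ⁴) compactly supported, L(f) = L(φ(D)f), where L is the Minkowski light ray transform Lg(x,θ) = ∫_ℝ g(s, x+sθ) ds and φ(D) is the Fourier multiplier by the indicator of the closure of the space-like cone (equal to 1 on {τ² ≤ |ξ|²} and 0 on {τ² > |ξ|²}). -/

import Mathlib

noncomputable section
open MeasureTheory

/-- The Fourier transform on `ℝ⁴ = ℝ_t × ℝ³_x`, `𝓕f(τ,ξ) = ∫ e^{−i(tτ + x·ξ)} f(t,x) dt dx`. -/
def spacetimeFourier (f : ℝ × EuclideanSpace ℝ (Fin 3) → ℂ)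
    (q : ℝ × EuclideanSpace ℝ (Fin 3)) : ℂ :=
  ∫ p : ℝ × EuclideanSpace ℝ (Fin 3),
    Complex.exp (-(Complex.I * ((p.1 * q.1 + inner ℝ p.2 q.2 : ℝ) : ℂ))) * f p

/-- The indicator function of the closure of the space-like cone, equal to `1` on
`{τ² ≤ |ξ|²}` and `0` on `{τ² > |ξ|²}`. -/
def closedSpacelikeIndicator (q : ℝ × EuclideanSpace ℝ (Fin 3)) : ℂ :=
  if q.1 ^ 2 ≤ ‖q.2‖ ^ 2 then 1 else 0

/-!
By the Fourier slice theorem, the Fourier transform in `x` of the light ray transform of `h` in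
direction `θ` is `ξ ↦ 𝓕h(-2π θ·ξ, 2π ξ)`. For `|θ| ≤ 1` these points lie in the closed space-like
cone, where the multiplier equals `1`, so the light ray transforms of `f` and `g` (both integrable)
have the same Fourier transform and hence agree almost everywhere.
-/

open Complex FourierTransform Real
open scoped RealInnerProductSpace ContDiff

section FourierInjective

variable {V : Type*} [NormedAddCommGroup V] [InnerProductSpace ℝ V] [FiniteDimensional ℝ V]
  [MeasurableSpace V] [BorelSpace V]
  {E : Type*} [NormedAddCommGroup E] [NormedSpace ℂ E] [CompleteSpace E]

theorem MeasureTheory.Integrable.integral_fourier_smul_eq {ψ : V → ℂ} {F : V → E}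
    (hψ : Integrable ψ) (hF : Integrable F) : ∫ ξ, 𝓕 ψ ξ • F ξ = ∫ x, ψ x • 𝓕 F x := by
  have := VectorFourier.integral_fourierIntegral_smul_eq_flip (L := innerₗ V)
    Real.continuous_fourierChar continuous_inner hψ hF
  rwa [flip_innerₗ] at this

/-- Every test function is the Fourier transform of a Schwartz function, so by the duality
`∫ 𝓕ψ • F = ∫ ψ • 𝓕F` the Fourier transform of `F` determines all integrals `∫ φ • F`. -/
theorem MeasureTheory.Integrable.ae_eq_of_fourier_eq {F₁ F₂ : V → E} (h₁ : Integrable F₁)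
    (h₂ : Integrable F₂) (h : 𝓕 F₁ = 𝓕 F₂) : F₁ =ᵐ[volume] F₂ := by
  refine ae_eq_of_integral_contDiff_smul_eq h₁.locallyIntegrable h₂.locallyIntegrable
    fun φ hφ hφc => ?_
  have hφc' : HasCompactSupport (ofRealCLM ∘ φ) := hφc.comp_left rfl
  set ψ : SchwartzMap V ℂ := 𝓕⁻ (hφc'.toSchwartzMap (by fun_prop))
  have hψ : ∀ F : V → E, ∫ x, φ x • F x = ∫ x, 𝓕 (ψ : V → ℂ) x • F x := fun F => by
    congr 1 with x
    change φ x • F x = (𝓕 ψ : SchwartzMap V ℂ) x • F x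
    simp [ψ, Complex.coe_smul]
  rw [hψ, hψ, ψ.integrable.integral_fourier_smul_eq h₁, ψ.integrable.integral_fourier_smul_eq h₂,
    h]

end FourierInjective

section LightRay

variable {V : Type*} [NormedAddCommGroup V] [NormedSpace ℝ V] {E : Type*} [NormedAddCommGroup E]

def lightRayTransform [NormedSpace ℝ E] (h : ℝ × V → E) (θ x : V) : E :=
  ∫ s, h (s, x + s • θ)

def lightRayShear (θ : V) : (ℝ × V) ≃ₜ (ℝ × V) where
  toFun p := (p.1, p.2 + p.1 • θ)
  invFun p := (p.1, p.2 - p.1 • θ)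
  left_inv p := by simp
  right_inv p := by simp
  continuous_toFun := by fun_prop
  continuous_invFun := by fun_prop

@[simp]
theorem lightRayShear_apply (θ : V) (p : ℝ × V) : lightRayShear θ p = (p.1, p.2 + p.1 • θ) :=
  rfl

variable [MeasureSpace V] [BorelSpace V] [SecondCountableTopology V] [SFinite (volume : Measure V)]
  [(volume : Measure V).IsAddRightInvariant]

theorem measurePreserving_lightRayShear (θ : V) :
    MeasurePreserving (lightRayShear θ) (volume : Measure (ℝ × V)) volume :=
  (MeasurePreserving.id volume).skew_product (by fun_prop)
    (.of_forall fun s => map_add_right_eq_self volume (s • θ))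

theorem MeasureTheory.Integrable.comp_lightRayShear {h : ℝ × V → E} (hh : Integrable h)
    (θ : V) : Integrable (h ∘ lightRayShear θ) :=
  ((measurePreserving_lightRayShear θ).integrable_comp_emb
    (lightRayShear θ).measurableEmbedding).2 hh

theorem MeasureTheory.Integrable.lightRayTransform [NormedSpace ℝ E] {h : ℝ × V → E}
    (hh : Integrable h) (θ : V) : Integrable (lightRayTransform h θ) :=
  (hh.comp_lightRayShear θ).integral_prod_right

end LightRay

local notation "ℝ³" => EuclideanSpace ℝ (Fin 3)


theorem integrable_spacetimeFourier_integrand {h : ℝ × ℝ³ → ℂ} (hh : Integrable h)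
    (q : ℝ × ℝ³) :
    Integrable (fun p : ℝ × ℝ³ => cexp (-(I * ((p.1 * q.1 + ⟪p.2, q.2⟫ : ℝ) : ℂ))) * h p) := by
  refine hh.bdd_mul (c := 1) (by fun_prop) (.of_forall fun p => ?_)
  rw [norm_exp]
  simp

/-- The factors `2π` translate Mathlib's normalisation `𝐞 (-⟪x, ξ⟫) = exp (-2πi ⟪x, ξ⟫)` into
that of `spacetimeFourier`. -/
theorem fourier_lightRayTransform {h : ℝ × ℝ³ → ℂ} (hh : Integrable h) (θ ξ : ℝ³) :
    𝓕 (lightRayTransform h θ) ξ = spacetimeFourier h (-(2 * π * ⟪θ, ξ⟫), (2 * π) • ξ) := by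
  let q : ℝ × ℝ³ := (-(2 * π * ⟪θ, ξ⟫), (2 * π) • ξ)
  let k := fun p : ℝ × ℝ³ => cexp (-(I * ((p.1 * q.1 + ⟪p.2, q.2⟫ : ℝ) : ℂ))) * h p
  have hk : Integrable (k ∘ lightRayShear θ) :=
    (integrable_spacetimeFourier_integrand hh q).comp_lightRayShear θ
  have hintegrand : ∀ s x, (𝐞 (-⟪x, ξ⟫) : ℂ) * h (s, x + s • θ) = k (lightRayShear θ (s, x)) := by
    intro s x
    simp only [k, q, lightRayShear_apply, Real.fourierChar_apply]
    congr 2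
    push_cast [inner_add_left, real_inner_smul_left, real_inner_smul_right]
    ring
  calc 𝓕 (lightRayTransform h θ) ξ
      = ∫ x, ∫ s, k (lightRayShear θ (s, x)) := by
        simp only [Real.fourier_eq, lightRayTransform, Circle.smul_def, smul_eq_mul,
          ← integral_const_mul, hintegrand]
    _ = ∫ p, k (lightRayShear θ p) := (integral_prod_symm _ hk).symm
    _ = ∫ p, k p := (measurePreserving_lightRayShear θ).integral_comp'
          (f := (lightRayShear θ).toMeasurableEquiv) k

theorem closedSpacelikeIndicator_eq_one_of_norm_le_one {θ : ℝ³} (hθ : ‖θ‖ ≤ 1) (c : ℝ)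
    (ξ : ℝ³) : closedSpacelikeIndicator (-(c * ⟪θ, ξ⟫), c • ξ) = 1 := by
  rw [closedSpacelikeIndicator, if_pos]
  rw [sq_le_sq, abs_neg, abs_mul, norm_smul, Real.norm_eq_abs, abs_mul, abs_abs, abs_norm]
  gcongr
  calc |⟪θ, ξ⟫| ≤ ‖θ‖ * ‖ξ‖ := abs_real_inner_le_norm θ ξ
    _ ≤ ‖ξ‖ := mul_le_of_le_one_left (norm_nonneg ξ) hθ

theorem lightRay_eq_lightRay_spacelike_projection_general
    (f g : ℝ × EuclideanSpace ℝ (Fin 3) → ℂ)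
    (hfL1 : Integrable f)
    (hgL1 : Integrable g)
    (hg : ∀ q, spacetimeFourier g q = closedSpacelikeIndicator q * spacetimeFourier f q)
    (θ : EuclideanSpace ℝ (Fin 3)) (hθ : ‖θ‖ = 1) :
    (fun x => ∫ s : ℝ, f (s, x + s • θ)) =ᵐ[volume]
      (fun x => ∫ s : ℝ, g (s, x + s • θ)) := by
  have hslice : 𝓕 (lightRayTransform f θ) = 𝓕 (lightRayTransform g θ) := funext fun ξ => by
    rw [fourier_lightRayTransform hfL1, fourier_lightRayTransform hgL1, hg,
      closedSpacelikeIndicator_eq_one_of_norm_le_one hθ.le, one_mul]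
  exact (hfL1.lightRayTransform θ).ae_eq_of_fourier_eq (hgL1.lightRayTransform θ) hslice

/-- Invariance of the light ray transform under the space-like projection:
for `f ∈ L²(ℝ⁴)` compactly supported, `L f = L (φ(D) f)`, where
`L g(x,θ) = ∫_ℝ g(s, x+sθ) ds` is the Minkowski light ray transform and `φ(D)` is the
Fourier multiplier by the indicator of the closure of the space-like cone.  Here
`g` represents `φ(D)f`, characterized by `𝓕g = φ·𝓕f`. -/
theorem lightRay_eq_lightRay_spacelike_projection
    (f g : ℝ × EuclideanSpace ℝ (Fin 3) → ℂ)
    (hfL2 : MemLp f 2) (hfsupp : HasCompactSupport f) (hfL1 : Integrable f)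
    (hgL1 : Integrable g)
    (hg : ∀ q, spacetimeFourier g q = closedSpacelikeIndicator q * spacetimeFourier f q)
    (θ : EuclideanSpace ℝ (Fin 3)) (hθ : ‖θ‖ = 1) :
    (fun x => ∫ s : ℝ, f (s, x + s • θ)) =ᵐ[volume]
      (fun x => ∫ s : ℝ, g (s, x + s • θ)) :=
  lightRay_eq_lightRay_spacelike_projection_general f g hfL1 hgL1 hg θ hθ
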